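/- The map 𝒯_{3,3} is differentiable on D = ℝ³ ∖ {m₁, m₂, m₃}, with derivative at x ∈ D represented by the 3×3 matrix J(x) whose i-th row is the unit vector (x − m_i)/d_i(x). Let H be the affine span of m₁, m₂, m₃. Then: (i) if m₁, m₂, m₃ are not collinear (so H is a plane), rank J(x) = 2 for x ∈ H ∩ D and rank J(x) = 3 for x ∈ D ∖ H; (ii) if m₁, m₂, m₃ are collinear (so H is a line), rank J(x) = 1 for x ∈ H ∩ D and rank J(x) = 2 for x ∈ D ∖ H. -/

import Mathlib

/-!
The `i`-th range `y ↦ ‖y - mᵢ‖` is smooth away from `mᵢ`, with gradient the unit vector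
`(x - mᵢ) / ‖x - mᵢ‖`; this gives the derivative. Rescaling rows by nonzero factors does not change
the rank, so `rank J(x)` is the dimension of the span of the vectors `x - mᵢ`, which is the
direction of the affine span of `{x, m₁, m₂, m₃}`. That is `dim H` when `x ∈ H` and `dim H + 1`
otherwise, and `dim H` is `2` for non-collinear receivers and `1` for collinear distinct ones.
-/

open Module Submodule Set

section Affine

variable {k V P : Type*} [Field k] [AddCommGroup V] [Module k V] [AddTorsor V P]

theorem span_range_vsub_eq_vectorSpan_insert {ι : Type*} (x : P) (p : ι → P) :
    span k (range fun i => x -ᵥ p i) = vectorSpan k (insert x (range p)) := by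
  rw [vectorSpan_eq_span_vsub_set_left k (mem_insert x _), image_insert_eq, vsub_self,
    span_insert_zero, ← range_comp]
  rfl

theorem finrank_vectorSpan_insert_of_notMem [FiniteDimensional k V] {s : Set P} {x : P}
    (hs : s.Nonempty) (hx : x ∉ affineSpan k s) :
    finrank k (vectorSpan k (insert x s)) = finrank k (vectorSpan k s) + 1 := by
  obtain ⟨p, hp⟩ := hs
  refine le_antisymm (finrank_vectorSpan_insert_le_set k s x)
    (Submodule.finrank_lt_finrank_of_lt ((vectorSpan_mono k (subset_insert x s)).lt_of_ne ?_))
  intro h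
  apply hx
  rw [← AffineSubspace.vsub_right_mem_direction_iff_mem (mem_affineSpan k hp),
    direction_affineSpan, h]
  exact vsub_mem_vectorSpan k (mem_insert x s) (mem_insert_of_mem x hp)

theorem Collinear.finrank_vectorSpan_eq_one {s : Set P} (h : Collinear k s) {p q : P}
    (hp : p ∈ s) (hq : q ∈ s) (hpq : p ≠ q) : finrank k (vectorSpan k s) = 1 := by
  have := h.finiteDimensional_vectorSpan
  exact le_antisymm h.finrank_le_one <| Submodule.one_le_finrank_iff.2 <|
    (Submodule.ne_bot_iff _).2 ⟨p -ᵥ q, vsub_mem_vectorSpan k hp hq, vsub_ne_zero.2 hpq⟩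

end Affine

theorem hasStrictFDerivAt_norm_sub {F : Type*} [NormedAddCommGroup F] [InnerProductSpace ℝ F]
    {x a : F} (h : x ≠ a) :
    HasStrictFDerivAt (fun y => ‖y - a‖) (‖x - a‖⁻¹ • innerSL ℝ (x - a)) x := by
  have hx : ‖x - a‖ ≠ 0 := norm_ne_zero_iff.2 (sub_ne_zero.2 h)
  have hsqrt := ((hasStrictFDerivAt_norm_sq (x - a)).comp x
    ((hasStrictFDerivAt_id x).sub_const a)).sqrt (pow_ne_zero 2 hx)
  simp only [id, Real.sqrt_sq (norm_nonneg _)] at hsqrt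
  refine hsqrt.congr_fderiv ?_
  ext v
  simp only [one_div, mul_inv_rev, ContinuousLinearMap.comp_id, smul_apply, coe_innerSL_apply,
    nsmul_eq_mul, Nat.cast_ofNat, smul_eq_mul]
  field_simp

theorem Matrix.rank_of_ofLp_eq_finrank_span {ι κ : Type*} [Finite ι] [Fintype κ]
    (v : ι → EuclideanSpace ℝ κ) :
    (Matrix.of fun i => WithLp.ofLp (v i)).rank = finrank ℝ (span ℝ (range v)) := by
  rw [Matrix.rank_eq_finrank_span_row, ← (WithLp.linearEquiv 2 ℝ (κ → ℝ)).finrank_map_eq,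
    Submodule.map_span, ← range_comp]
  rfl

section RangeMap

variable {ι κ : Type*} [Fintype ι] [Fintype κ]

noncomputable def rangeMap (m : ι → EuclideanSpace ℝ κ) (x : EuclideanSpace ℝ κ) :
    EuclideanSpace ℝ ι :=
  WithLp.toLp 2 fun i => ‖x - m i‖

noncomputable def rangeJacobian (m : ι → EuclideanSpace ℝ κ) (x : EuclideanSpace ℝ κ) :
    Matrix ι κ ℝ :=
  Matrix.of fun i l => (x l - m i l) / ‖x - m i‖

theorem hasStrictFDerivAt_rangeMap [DecidableEq κ] (m : ι → EuclideanSpace ℝ κ)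
    {x : EuclideanSpace ℝ κ} (hx : ∀ i, x ≠ m i) :
    HasStrictFDerivAt (rangeMap m)
      (Matrix.toEuclideanLin (rangeJacobian m x)).toContinuousLinearMap x := by
  refine (hasStrictFDerivAt_piLp 2).2 fun i => ?_
  have row : PiLp.proj 2 (fun _ => ℝ) i ∘L
      (Matrix.toEuclideanLin (rangeJacobian m x)).toContinuousLinearMap =
        ‖x - m i‖⁻¹ • innerSL ℝ (x - m i) := by
    ext v
    simp only [ContinuousLinearMap.comp_apply, smul_apply, coe_innerSL_apply, PiLp.inner_apply,
      rangeJacobian, div_eq_inv_mul, LinearMap.coe_toContinuousLinearMap', PiLp.proj_apply,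
      Matrix.ofLp_toLpLin, Matrix.toLin'_apply, Matrix.mulVec, dotProduct, Matrix.of_apply,
      PiLp.sub_apply, RCLike.inner_apply, Real.ringHom_apply, smul_eq_mul, Finset.mul_sum]
    exact Finset.sum_congr rfl fun l _ => by ring
  rw [row]
  exact hasStrictFDerivAt_norm_sub (hx i)

theorem rangeJacobian_eq_diagonal_mul [DecidableEq ι] (m : ι → EuclideanSpace ℝ κ)
    (x : EuclideanSpace ℝ κ) :
    rangeJacobian m x =
      Matrix.diagonal (fun i => ‖x - m i‖⁻¹) * Matrix.of fun i => WithLp.ofLp (x - m i) := by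
  ext i l
  simp [rangeJacobian, Matrix.diagonal_mul, div_eq_inv_mul]

theorem rank_rangeJacobian (m : ι → EuclideanSpace ℝ κ) {x : EuclideanSpace ℝ κ}
    (hx : ∀ i, x ≠ m i) :
    (rangeJacobian m x).rank = finrank ℝ (vectorSpan ℝ (insert x (range m))) := by
  classical
  have hdet : IsUnit (Matrix.diagonal fun i => ‖x - m i‖⁻¹).det := by
    rw [isUnit_iff_ne_zero, Matrix.det_diagonal, Finset.prod_ne_zero_iff]
    exact fun i _ => inv_ne_zero (norm_ne_zero_iff.2 (sub_ne_zero.2 (hx i)))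
  rw [rangeJacobian_eq_diagonal_mul, Matrix.rank_mul_eq_right_of_isUnit_det _ _ hdet,
    Matrix.rank_of_ofLp_eq_finrank_span, ← span_range_vsub_eq_vectorSpan_insert]
  rfl

theorem rank_rangeJacobian_of_mem (m : ι → EuclideanSpace ℝ κ) {x : EuclideanSpace ℝ κ}
    (hx : ∀ i, x ≠ m i) (hH : x ∈ affineSpan ℝ (range m)) :
    (rangeJacobian m x).rank = finrank ℝ (vectorSpan ℝ (range m)) := by
  rw [rank_rangeJacobian m hx, vectorSpan_insert_eq_vectorSpan hH]

theorem rank_rangeJacobian_of_notMem [Nonempty ι] (m : ι → EuclideanSpace ℝ κ)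
    {x : EuclideanSpace ℝ κ} (hx : ∀ i, x ≠ m i) (hH : x ∉ affineSpan ℝ (range m)) :
    (rangeJacobian m x).rank = finrank ℝ (vectorSpan ℝ (range m)) + 1 := by
  rw [rank_rangeJacobian m hx, finrank_vectorSpan_insert_of_notMem (range_nonempty m) hH]

end RangeMap

/-- 𝒯_{3,3} is differentiable on ℝ³ ∖ {m₁,m₂,m₃} with Jacobian J(x)
whose i-th row is (x − mᵢ)/dᵢ(x); with H the affine span of the receivers, the rank
of J(x) is as described depending on whether the receivers are collinear and whether
x ∈ H. -/
theorem stmt18 (m : Fin 3 → EuclideanSpace ℝ (Fin 3)) (hm : Function.Injective m)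
    (J : EuclideanSpace ℝ (Fin 3) → Matrix (Fin 3) (Fin 3) ℝ)
    (hJ : ∀ x i l, J x i l = (x l - m i l) / ‖x - m i‖)
    (T : EuclideanSpace ℝ (Fin 3) → EuclideanSpace ℝ (Fin 3))
    (hT : ∀ x i, T x i = ‖x - m i‖) :
    (∀ x : EuclideanSpace ℝ (Fin 3), (∀ i, x ≠ m i) →
      HasFDerivAt T (LinearMap.toContinuousLinearMap (Matrix.toEuclideanLin (J x))) x) ∧
    (¬ Collinear ℝ (Set.range m) →
      ∀ x : EuclideanSpace ℝ (Fin 3), (∀ i, x ≠ m i) →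
        ((x ∈ affineSpan ℝ (Set.range m) → (J x).rank = 2) ∧
         (x ∉ affineSpan ℝ (Set.range m) → (J x).rank = 3))) ∧
    (Collinear ℝ (Set.range m) →
      ∀ x : EuclideanSpace ℝ (Fin 3), (∀ i, x ≠ m i) →
        ((x ∈ affineSpan ℝ (Set.range m) → (J x).rank = 1) ∧
         (x ∉ affineSpan ℝ (Set.range m) → (J x).rank = 2))) := by
  obtain rfl : T = rangeMap m := funext fun x => PiLp.ext (hT x)
  obtain rfl : J = rangeJacobian m := funext fun x => Matrix.ext (hJ x)
  refine ⟨fun x hx => (hasStrictFDerivAt_rangeMap m hx).hasFDerivAt, fun hcol x hx => ?_,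
    fun hcol x hx => ?_⟩
  · have hH : finrank ℝ (vectorSpan ℝ (range m)) = 2 :=
      (affineIndependent_iff_not_collinear.2 hcol).finrank_vectorSpan (Fintype.card_fin 3)
    exact ⟨fun h => by rw [rank_rangeJacobian_of_mem m hx h, hH],
      fun h => by rw [rank_rangeJacobian_of_notMem m hx h, hH]⟩
  · have hH : finrank ℝ (vectorSpan ℝ (range m)) = 1 :=
      hcol.finrank_vectorSpan_eq_one (mem_range_self 0) (mem_range_self 1) (hm.ne (by decide))
    exact ⟨fun h => by rw [rank_rangeJacobian_of_mem m hx h, hH],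
      fun h => by rw [rank_rangeJacobian_of_notMem m hx h, hH]⟩
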